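/- arXiv:2312.09905 — 3 statements merged into one kernel-verified Lean document; each statement's English description precedes it below -/
import Mathlib

section
/- If F is a final spanning outforest of a digraph D (i.e., a spanning outforest such that for every arc (u,v) of D that is backward with respect to F, F contains a directed path from v to u), then for every i, the set L_i(F) of vertices at level i in F is a stable (independent) set in the underlying graph of D. -/
/-- A final spanning outforest of a digraph `D` on vertex set `V`, encoded by a
parent function and a level function.  Arcs of the forest go from `parent v` to `v`,
are arcs of `D`, roots have level 1, levels increase along arcs, and for every
backward arc `(u,v)` of `D` (i.e. with `level u ≥ level v`) the forest contains a
directed path from `v` to `u`. -/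
structure FinalOutForest (V : Type*) (D : V → V → Prop) where
  parent : V → Option V
  level : V → ℕ
  parent_arc : ∀ u v : V, parent v = some u → D u v
  level_root : ∀ v : V, parent v = none → level v = 1
  level_parent : ∀ u v : V, parent v = some u → level v = level u + 1
  final : ∀ u v : V, D u v → level v ≤ level u →
    Relation.ReflTransGen (fun a b => parent b = some a) v u

namespace FinalOutForest

variable {V : Type*} {D : V → V → Prop} (F : FinalOutForest V D)

theorem level_lt_of_transGen {a b : V}
    (h : Relation.TransGen (fun x y => F.parent y = some x) a b) : F.level a < F.level b := by
  have hlt : Relation.TransGen (· < ·) (F.level a) (F.level b) :=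
    Relation.TransGen.lift (p := (· < ·)) F.level
      (fun x y hxy => by simp [Function.onFun, F.level_parent x y hxy]) _ _ h
  rwa [Relation.transGen_eq_self] at hlt

end FinalOutForest

/-- In a final spanning outforest of a simple digraph, every level set `L_i(F)` is
a stable set of the underlying graph of `D`. -/
theorem level_sets_stable {V : Type*} (D : V → V → Prop)
    (hsimple : ∀ x : V, ¬ D x x)
    (F : FinalOutForest V D) (i : ℕ) :
    ∀ u v : V, F.level u = i → F.level v = i → ¬ D u v := by
  intro u v hu hv huv
  rcases Relation.reflTransGen_iff_eq_or_transGen.mp (F.final u v huv (by omega)) with rfl | hpath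
  · exact hsimple u huv
  · exact (F.level_lt_of_transGen hpath).ne (hv.trans hu.symm)
end

section
/- Every digraph D admits a final spanning outforest, i.e., a spanning outforest F such that for every arc (u,v) of D with l_F(u) ≥ l_F(v), F contains a directed path from v to u. -/
structure LeveledOutForest (V : Type*) (D : V → V → Prop) where
  parent : V → Option V
  level : V → ℕ
  parent_arc : ∀ u v : V, parent v = some u → D u v
  level_root : ∀ v : V, parent v = none → level v = 1
  level_parent : ∀ u v : V, parent v = some u → level v = level u + 1

namespace LeveledOutForest

variable {V : Type*} {D : V → V → Prop}

instance : Inhabited (LeveledOutForest V D) :=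
  ⟨{ parent := fun _ => none
     level := fun _ => 1
     parent_arc := fun _ _ h => by cases h
     level_root := fun _ _ => rfl
     level_parent := fun _ _ h => by cases h }⟩

variable (F : LeveledOutForest V D)

def Reaches (v w : V) : Prop :=
  Relation.ReflTransGen (fun a b => F.parent b = some a) v w

theorem reaches_refl (v : V) : F.Reaches v v := Relation.ReflTransGen.refl

theorem reaches_iff_of_parent_eq_some {v w a : V} (hw : w ≠ v) (h : F.parent w = some a) :
    F.Reaches v w ↔ F.Reaches v a := by
  refine ⟨fun hvw => ?_, fun hva => hva.tail h⟩
  rcases Relation.ReflTransGen.cases_tail hvw with rfl | ⟨b, hvb, hb⟩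
  · exact absurd rfl hw
  · rw [h, Option.some_inj] at hb
    exact hb ▸ hvb

theorem not_reaches_of_parent_eq_none {v w : V} (hw : w ≠ v) (h : F.parent w = none) :
    ¬F.Reaches v w := by
  intro hvw
  rcases Relation.ReflTransGen.cases_tail hvw with rfl | ⟨b, -, hb⟩
  · exact hw rfl
  · rw [h] at hb; cases hb

theorem exists_level_eq {k : ℕ} (hk : 1 ≤ k) (v : V) (hkv : k ≤ F.level v) :
    ∃ w, F.level w = k := by
  induction hn : F.level v using Nat.strong_induction_on generalizing v with
  | _ n ih =>
    rcases hkv.eq_or_lt with hkv | hkv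
    · exact ⟨v, hkv.symm⟩
    cases hp : F.parent v with
    | none => have := F.level_root v hp; omega
    | some a =>
      have := F.level_parent a v hp
      exact ih (F.level a) (by omega) a (by omega) rfl

theorem level_le_card [Fintype V] (v : V) : F.level v ≤ Fintype.card V := by
  have hsub : Finset.Icc 1 (F.level v) ⊆ Finset.univ.image F.level := fun k hk => by
    obtain ⟨w, hw⟩ := F.exists_level_eq (Finset.mem_Icc.mp hk).1 v (Finset.mem_Icc.mp hk).2
    exact Finset.mem_image.mpr ⟨w, Finset.mem_univ w, hw⟩
  calc F.level v = (Finset.Icc 1 (F.level v)).card := by simp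
    _ ≤ (Finset.univ.image F.level).card := Finset.card_le_card hsub
    _ ≤ Fintype.card V := Finset.card_image_le

theorem exists_forall_sum_level_le [Fintype V] :
    ∃ F : LeveledOutForest V D, ∀ G : LeveledOutForest V D,
      ∑ v, G.level v ≤ ∑ v, F.level v := by
  let S := Set.range fun G : LeveledOutForest V D => ∑ v, G.level v
  have hS : BddAbove S := ⟨Fintype.card V * Fintype.card V, by
    rintro _ ⟨G, rfl⟩
    exact (Finset.sum_le_sum fun v _ => G.level_le_card v).trans_eq (by simp)⟩
  obtain ⟨F, hF⟩ := Nat.sSup_mem (Set.range_nonempty _) hS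
  exact ⟨F, fun G => (le_csSup hS ⟨G, rfl⟩).trans_eq hF.symm⟩

open Classical in
noncomputable def reroute {u v : V} (huv : D u v) (hvu : ¬F.Reaches v u)
    (hle : F.level v ≤ F.level u + 1) : LeveledOutForest V D where
  parent := Function.update F.parent v (some u)
  level w := if F.Reaches v w then F.level w + (F.level u + 1 - F.level v) else F.level w
  parent_arc a w h := by
    rcases eq_or_ne w v with rfl | hw
    · rw [Function.update_self, Option.some_inj] at h
      exact h ▸ huv
    · exact F.parent_arc a w (by rwa [Function.update_of_ne hw] at h)
  level_root w h := by
    have hw : w ≠ v := by rintro rfl; simp at h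
    rw [Function.update_of_ne hw] at h
    rw [if_neg (F.not_reaches_of_parent_eq_none hw h)]
    exact F.level_root w h
  level_parent a w h := by
    rcases eq_or_ne w v with rfl | hw
    · rw [Function.update_self, Option.some_inj] at h
      subst h
      rw [if_pos (F.reaches_refl w), if_neg hvu]
      omega
    · rw [Function.update_of_ne hw] at h
      have := F.level_parent a w h
      by_cases hva : F.Reaches v a
      · rw [if_pos ((F.reaches_iff_of_parent_eq_some hw h).mpr hva), if_pos hva]
        omega
      · rw [if_neg (mt (F.reaches_iff_of_parent_eq_some hw h).mp hva), if_neg hva]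
        omega

theorem sum_level_lt_reroute [Fintype V] {u v : V} (huv : D u v) (hvu : ¬F.Reaches v u)
    (hle : F.level v ≤ F.level u) :
    ∑ w, F.level w < ∑ w, (F.reroute huv hvu (hle.trans (Nat.le_succ _))).level w := by
  refine Finset.sum_lt_sum (fun w _ => ?_) ⟨v, Finset.mem_univ v, ?_⟩
  · dsimp only [reroute]
    split_ifs <;> omega
  · dsimp only [reroute]
    rw [if_pos (F.reaches_refl v)]
    omega

end LeveledOutForest

/-- Every (finite) digraph admits a final spanning outforest. -/
theorem exists_final_spanning_outforest {V : Type*} [Fintype V] (D : V → V → Prop) :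
    Nonempty (FinalOutForest V D) := by
  obtain ⟨F, hF⟩ := LeveledOutForest.exists_forall_sum_level_le (D := D)
  refine ⟨{ F with final := fun u v huv hle => ?_ }⟩
  by_contra hvu
  exact (F.sum_level_lt_reroute huv hvu hle).not_ge (hF _)
end

section
/- Every digraph with chromatic number at least n contains every directed (one-block) path of length n−1. -/
/-!
Choose a maximal acyclic subdigraph `A` of `D` (Zorn) and colour each vertex by the length of
a longest `A`-walk starting at it. Acyclicity makes every `A`-walk a directed path of `D`, so
without a directed path with `k` arcs at most `k` colours occur. An arc of `A` strictly
decreases the colour; an arc `u → w` of `D` outside `A` closes a cycle when added to `A`, so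
`A` has a walk from `w` to `u` and the colour strictly increases along it. Either way the ends
of every arc get different colours.
-/

/-- `HasDirPath D k` : the digraph `D` contains a directed path with `k` arcs. -/
def HasDirPath {V : Type*} (D : V → V → Prop) (k : ℕ) : Prop :=
  ∃ x : Fin (k + 1) → V, Function.Injective x ∧
    ∀ i : ℕ, ∀ _ : i < k, D (x ⟨i, by omega⟩) (x ⟨i + 1, by omega⟩)

section

open Relation

variable {V : Type*}

def IsDirAcyclic (r : V → V → Prop) : Prop :=
  ∀ a, ¬ TransGen r a a

def HasDirWalkFrom (r : V → V → Prop) (v : V) (m : ℕ) : Prop :=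
  ∃ x : ℕ → V, x 0 = v ∧ ∀ i < m, r (x i) (x (i + 1))

namespace HasDirWalkFrom

variable {r : V → V → Prop} {a b v : V} {m : ℕ}

theorem zero (r : V → V → Prop) (v : V) : HasDirWalkFrom r v 0 :=
  ⟨fun _ => v, rfl, fun _ hi => absurd hi (Nat.not_lt_zero _)⟩

theorem mono_length {m' : ℕ} (h : HasDirWalkFrom r v m) (hm : m' ≤ m) :
    HasDirWalkFrom r v m' :=
  let ⟨x, hx0, hx⟩ := h
  ⟨x, hx0, fun i hi => hx i (hi.trans_le hm)⟩

theorem cons (hab : r a b) (h : HasDirWalkFrom r b m) : HasDirWalkFrom r a (m + 1) := by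
  obtain ⟨x, rfl, hx⟩ := h
  refine ⟨fun | 0 => a | i + 1 => x i, rfl, fun i hi => ?_⟩
  cases i with
  | zero => exact hab
  | succ i => exact hx i (by omega)

theorem of_transGen (hab : TransGen r a b) (h : HasDirWalkFrom r b m) :
    HasDirWalkFrom r a (m + 1) := by
  induction hab using TransGen.head_induction_on with
  | single hab => exact h.cons hab
  | head hac _ ih => exact (ih.cons hac).mono_length (Nat.le_succ _)

end HasDirWalkFrom

theorem transGen_of_dirWalk {r : V → V → Prop} {x : ℕ → V} {m : ℕ}
    (hx : ∀ i < m, r (x i) (x (i + 1))) {i j : ℕ} (hij : i < j) (hj : j ≤ m) :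
    TransGen r (x i) (x j) := by
  induction j, hij using Nat.le_induction with
  | base => exact .single (hx i hj)
  | succ j _ ih => exact (ih (by omega)).tail (hx j hj)

theorem HasDirWalkFrom.hasDirPath {r : V → V → Prop} (hr : IsDirAcyclic r) {v : V}
    {m : ℕ} (h : HasDirWalkFrom r v m) : HasDirPath r m := by
  obtain ⟨x, -, hx⟩ := h
  refine ⟨fun i => x i, fun i j hij => ?_, fun i hi => hx i hi⟩
  replace hij : x i = x j := hij
  by_contra hne
  rcases Fin.val_ne_iff.mpr hne |>.lt_or_gt with hlt | hlt
  · exact hr _ (hij ▸ transGen_of_dirWalk hx hlt (Nat.le_of_lt_succ j.isLt))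
  · exact hr _ (hij ▸ transGen_of_dirWalk hx hlt (Nat.le_of_lt_succ i.isLt))

theorem HasDirPath.mono {r s : V → V → Prop} (hrs : r ≤ s) {k : ℕ} (h : HasDirPath r k) :
    HasDirPath s k :=
  let ⟨x, hx, hstep⟩ := h
  ⟨x, hx, fun i hi => hrs _ _ (hstep i hi)⟩

theorem transGen_of_isChain {c : Set (V → V → Prop)} (hc : IsChain (· ≤ ·) c) {a b : V}
    (h : TransGen (fun x y => ∃ r ∈ c, r x y) a b) : ∃ r ∈ c, TransGen r a b := by
  induction h with
  | single hab =>
    obtain ⟨r, hr, hab⟩ := hab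
    exact ⟨r, hr, .single hab⟩
  | tail _ hbc ih =>
    obtain ⟨r, hr, hab⟩ := ih
    obtain ⟨s, hs, hbc⟩ := hbc
    rcases hc.total hr hs with hrs | hsr
    · exact ⟨s, hs, (TransGen.mono (fun x y h => hrs x y h) _ _ hab).tail hbc⟩
    · exact ⟨r, hr, hab.tail (hsr _ _ hbc)⟩

theorem transGen_or_of_transGen_insert {r : V → V → Prop} {u w a b : V}
    (h : TransGen (fun x y => r x y ∨ x = u ∧ y = w) a b) :
    TransGen r a b ∨ ReflTransGen r a u ∧ ReflTransGen r w b := by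
  induction h with
  | single hab =>
    rcases hab with hab | ⟨rfl, rfl⟩
    · exact .inl (.single hab)
    · exact .inr ⟨.refl, .refl⟩
  | tail _ hbc ih =>
    rcases hbc with hbc | ⟨rfl, rfl⟩
    · rcases ih with hab | ⟨hau, hwb⟩
      · exact .inl (hab.tail hbc)
      · exact .inr ⟨hau, hwb.tail hbc⟩
    · rcases ih with hab | ⟨hau, -⟩
      · exact .inr ⟨hab.to_reflTransGen, .refl⟩
      · exact .inr ⟨hau, .refl⟩

theorem exists_maximal_acyclic_le (D : V → V → Prop) :
    ∃ A ≤ D, IsDirAcyclic A ∧ ∀ u w, D u w → ¬ A u w → ReflTransGen A w u := by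
  obtain ⟨A, ⟨hAD, hA⟩, hmax⟩ := zorn_le₀ {r | r ≤ D ∧ IsDirAcyclic r}
    fun c hcS hc => ⟨fun x y => ∃ r ∈ c, r x y,
      ⟨fun x y ⟨r, hr, hxy⟩ => (hcS hr).1 x y hxy,
        fun a ha => let ⟨r, hr, hra⟩ := transGen_of_isChain hc ha; (hcS hr).2 a hra⟩,
      fun r hr x y hxy => ⟨r, hr, hxy⟩⟩
  refine ⟨A, hAD, hA, fun u w huw hA_uw => ?_⟩
  have hcycle : ¬ IsDirAcyclic fun x y => A x y ∨ x = u ∧ y = w := fun hacyc =>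
    hA_uw <| hmax (y := fun x y => A x y ∨ x = u ∧ y = w)
      ⟨fun x y => Or.rec (hAD x y) (fun ⟨hx, hy⟩ => hx ▸ hy ▸ huw), hacyc⟩
      (fun x y => Or.inl) u w (.inr ⟨rfl, rfl⟩)
  obtain ⟨a, ha⟩ := not_forall.mp hcycle
  rcases transGen_or_of_transGen_insert (not_not.mp ha) with haa | ⟨hau, hwa⟩
  · exact absurd haa (hA a)
  · exact hwa.trans hau

section LongestDirWalk

open Classical

/-- Capped at `k`: this is the length of a longest `r`-walk from `v` only when all such walks are
shorter than `k`, as assumed below. -/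
noncomputable def longestDirWalkLength (r : V → V → Prop) (k : ℕ) (v : V) : ℕ :=
  Nat.findGreatest (HasDirWalkFrom r v) k

variable {r : V → V → Prop} {k : ℕ} (hk : ∀ v m, HasDirWalkFrom r v m → m < k)
include hk

theorem longestDirWalkLength_lt (v : V) : longestDirWalkLength r k v < k :=
  hk v _ (Nat.findGreatest_spec (Nat.zero_le k) (HasDirWalkFrom.zero r v))

theorem longestDirWalkLength_lt_of_transGen {a b : V} (hab : TransGen r a b) :
    longestDirWalkLength r k b < longestDirWalkLength r k a :=
  have hwalk := (Nat.findGreatest_spec (Nat.zero_le k) (HasDirWalkFrom.zero r b)).of_transGen hab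
  Nat.le_findGreatest (hk a _ hwalk).le hwalk

end LongestDirWalk

theorem colorable_fromRel_of_not_hasDirPath {D : V → V → Prop} {k : ℕ}
    (h : ¬ HasDirPath D k) : (SimpleGraph.fromRel D).Colorable k := by
  obtain ⟨A, hAD, hA, hmax⟩ := exists_maximal_acyclic_le D
  have hk : ∀ v m, HasDirWalkFrom A v m → m < k := fun v m hwalk =>
    lt_of_not_ge fun hkm => h (((hwalk.mono_length hkm).hasDirPath hA).mono hAD)
  have harc : ∀ u w, u ≠ w → D u w →
      longestDirWalkLength A k u ≠ longestDirWalkLength A k w := by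
    intro u w hne huw
    by_cases hA_uw : A u w
    · exact (longestDirWalkLength_lt_of_transGen hk (.single hA_uw)).ne'
    · have hwu := (reflTransGen_iff_eq_or_transGen.mp (hmax u w huw hA_uw)).resolve_left hne
      exact (longestDirWalkLength_lt_of_transGen hk hwu).ne
  refine ⟨.mk (fun v => ⟨longestDirWalkLength A k v, longestDirWalkLength_lt hk v⟩)
    fun {u w} huw heq => ?_⟩
  obtain ⟨hne, huw | hwu⟩ := SimpleGraph.fromRel_adj D u w |>.mp huw
  · exact harc u w hne huw (congrArg Fin.val heq)
  · exact harc w u hne.symm hwu (congrArg Fin.val heq).symm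

end

/-- Gallai–Roy: every digraph with chromatic number at least `n` contains the
directed path of length `n - 1`. -/
theorem gallai_roy_universal {V : Type*} (D : V → V → Prop) (n : ℕ) (hn : 1 ≤ n)
    (h : (n : ℕ∞) ≤ (SimpleGraph.fromRel D).chromaticNumber) :
    HasDirPath D (n - 1) := by
  by_contra hpath
  have hle := h.trans (colorable_fromRel_of_not_hasDirPath hpath).chromaticNumber_le
  have : n ≤ n - 1 := by exact_mod_cast hle
  omega
end
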